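/- arXiv:1601.02111 — 2 statements merged into one kernel-verified Lean document; each statement's English description precedes it below -/
import Mathlib

section
/- Let λ₁ ≤ λ₂ ≤ ... ≤ λ_{n-1} be nonnegative real numbers with sum R = λ₁ + ... + λ_{n-1} > 0, and suppose R² = 2C₀(λ₁² + ... + λ_{n-1}²) for a constant C₀ > (n-2)/2. Then there exists a constant δ(n, C₀) > 0, depending only on n and C₀, such that λ₁/λ_{n-1} ≥ δ(n, C₀). -/
/-- Eigenvalue pinching: if nonnegative reals λ₁ ≤ ⋯ ≤ λ_{n-1} have positive sum `R` and
satisfy `R² = 2C₀ Σ λᵢ²` with `C₀ > (n-2)/2`, then `λ₁/λ_{n-1}` is bounded below by a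
constant `δ > 0` depending only on `n` and `C₀`. -/
theorem stmt0 (n : ℕ) (hn : 2 ≤ n) (C₀ : ℝ) (hC₀ : ((n : ℝ) - 2) / 2 < C₀) :
    ∃ δ : ℝ, 0 < δ ∧
      ∀ lam : Fin (n - 1) → ℝ, Monotone lam → (∀ i, 0 ≤ lam i) →
        0 < ∑ i, lam i →
        (∑ i, lam i) ^ 2 = 2 * C₀ * ∑ i, (lam i) ^ 2 →
        δ ≤ lam ⟨0, by omega⟩ / lam ⟨n - 2, by omega⟩ := by
  have hn2 : (2:ℝ) ≤ (n:ℝ) := by exact_mod_cast hn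
  have hC0pos : 0 < C₀ := lt_of_le_of_lt (by linarith) hC₀
  set c : ℝ := ((n:ℝ) - 2) / (2 * C₀) with hc
  have hc0 : 0 ≤ c := div_nonneg (by linarith) (by positivity)
  have hc1 : c < 1 := by
    rw [hc, div_lt_one (by positivity)]; linarith
  have hsq : Real.sqrt c < 1 := by
    have := Real.sqrt_lt_sqrt hc0 hc1
    simpa using this
  refine ⟨1 - Real.sqrt c, by linarith, ?_⟩
  intro lam hmono hnn hRpos heq
  set i0 : Fin (n-1) := ⟨0, by omega⟩
  set im : Fin (n-1) := ⟨n-2, by omega⟩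
  set R : ℝ := ∑ i, lam i with hR
  set S : ℝ := ∑ i, (lam i)^2 with hS
  have hmax : ∀ i, lam i ≤ lam im := by
    intro i; exact hmono (by simp [im, Fin.le_def]; omega)
  have hSnn : 0 ≤ S := Finset.sum_nonneg (fun i _ => sq_nonneg _)
  -- λ_max ≤ R
  have hLR : lam im ≤ R := by
    have := Finset.single_le_sum (f := lam) (fun i _ => hnn i) (Finset.mem_univ im)
    simpa [hR] using this
  have hLpos : 0 < lam im := by
    by_contra h
    push_neg at h
    have : R ≤ 0 := by
      rw [hR]
      apply Finset.sum_nonpos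
      intro i _; exact le_trans (hmax i) h
    linarith
  -- split sums over erase i0
  have hsplit : R = lam i0 + ∑ i ∈ Finset.univ.erase i0, lam i := by
    rw [hR, ← Finset.add_sum_erase _ _ (Finset.mem_univ i0)]
  have hsplit2 : S = (lam i0)^2 + ∑ i ∈ Finset.univ.erase i0, (lam i)^2 := by
    rw [hS, ← Finset.add_sum_erase _ _ (Finset.mem_univ i0)]
  have hcard : (Finset.univ.erase i0).card = n - 2 := by
    rw [Finset.card_erase_of_mem (Finset.mem_univ i0), Finset.card_univ,
      Fintype.card_fin]
    omega
  have hCS : (∑ i ∈ Finset.univ.erase i0, lam i)^2 ≤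
      ((n:ℝ) - 2) * ∑ i ∈ Finset.univ.erase i0, (lam i)^2 := by
    have := sq_sum_le_card_mul_sum_sq (s := Finset.univ.erase i0) (f := lam)
    rw [hcard] at this
    have hcast : ((n - 2 : ℕ) : ℝ) = (n:ℝ) - 2 := by
      rw [Nat.cast_sub hn]; norm_num
    calc (∑ i ∈ Finset.univ.erase i0, lam i)^2
        ≤ ((n - 2 : ℕ) : ℝ) * ∑ i ∈ Finset.univ.erase i0, (lam i)^2 := this
      _ = ((n:ℝ) - 2) * ∑ i ∈ Finset.univ.erase i0, (lam i)^2 := by rw [hcast]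
  have hsum2 : ∑ i ∈ Finset.univ.erase i0, (lam i)^2 ≤ S := by
    rw [hsplit2]; nlinarith [sq_nonneg (lam i0)]
  have hkey : (R - lam i0)^2 ≤ c * R^2 := by
    have h1 : (R - lam i0)^2 ≤ ((n:ℝ) - 2) * S := by
      have : R - lam i0 = ∑ i ∈ Finset.univ.erase i0, lam i := by
        rw [hsplit]; ring
      rw [this]
      exact le_trans hCS (by nlinarith)
    have hSval : S = R^2 / (2 * C₀) := by
      field_simp at heq ⊢; linarith
    rw [hc]
    rw [hSval] at h1
    calc (R - lam i0)^2 ≤ ((n:ℝ) - 2) * (R^2 / (2*C₀)) := h1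
      _ = ((n:ℝ) - 2) / (2*C₀) * R^2 := by ring
  -- take square roots
  have hRl0 : 0 ≤ R - lam i0 := by
    have h2 : ∑ i ∈ Finset.univ.erase i0, lam i ≥ 0 :=
      Finset.sum_nonneg (fun i _ => hnn i)
    rw [hsplit]; linarith
  have hsqrtkey : R - lam i0 ≤ Real.sqrt c * R := by
    have h1 : R - lam i0 = Real.sqrt ((R - lam i0)^2) := by
      rw [Real.sqrt_sq hRl0]
    have h2 : Real.sqrt (c * R^2) = Real.sqrt c * R := by
      rw [Real.sqrt_mul hc0, Real.sqrt_sq (le_of_lt hRpos)]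
    rw [h1, ← h2]
    exact Real.sqrt_le_sqrt hkey
  -- conclude
  have hl : (1 - Real.sqrt c) * R ≤ lam i0 := by linarith
  rw [le_div_iff₀ hLpos]
  have hsc0 : 0 ≤ Real.sqrt c := Real.sqrt_nonneg _
  nlinarith
end

section
/- Let A, B be symmetric bilinear forms (Ricci tensors) on an (n-1)-dimensional inner product space related by the Gauss-type equation Ā_{ij} = A_{ij} + E_{ij} - (1/|∇f|²)·Σ_k (A_{ij}A_{kk} - A_{ik}A_{kj}), where A ≥ 0 and 0 ≤ Σ_k(A_{ij}A_{kk} - A_{ik}A_{kj})·v^i v^j ≤ (3/2)·A_{ij}v^i v^j·|∇f|², and assume moreover |E_{ij}v^iv^j| ≤ o(1)·A_{ij}v^iv^j and Ā ≥ ε·R·g (pinching of the induced Ricci curvature). Then A_{ij}v^iv^j ≥ (1/3)Ā_{ij}v^iv^j ≥ (ε/3)·R·g(v,v) for all unit vectors v, when the o(1) term is sufficiently small. -/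
open Matrix

/-- Transfer of pinching through the Gauss equation: if
`Ā = A + E - (1/|∇f|²)·(A·trA - A²)` with `A ⪰ 0`, the quadratic correction term pinched
between `0` and `(3/2)|∇f|²·A`, the error `E` bounded by a sufficiently small multiple
`η ≤ 1/2` of `A`, and `Ā ≥ ε·R` on unit vectors, then for all unit vectors `v`,
`A(v,v) ≥ (1/3)Ā(v,v) ≥ (ε/3)·R`. -/
theorem stmt13 {m : ℕ} (A Abar Err : Matrix (Fin m) (Fin m) ℝ)
    (nf2 R ε η : ℝ) (hnf2 : 0 < nf2) (hε : 0 < ε) (hη : 0 ≤ η) (hsmall : η ≤ 1 / 2)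
    (hA : A.PosSemidef)
    (hGauss : ∀ i j, Abar i j =
      A i j + Err i j - (1 / nf2) * ∑ k, (A i j * A k k - A i k * A k j))
    (hcorr : ∀ v : Fin m → ℝ,
      0 ≤ ∑ i, ∑ j, v i * v j * ∑ k, (A i j * A k k - A i k * A k j) ∧
      ∑ i, ∑ j, v i * v j * ∑ k, (A i j * A k k - A i k * A k j) ≤
        (3 / 2) * nf2 * (v ⬝ᵥ A.mulVec v))
    (hErr : ∀ v : Fin m → ℝ, |v ⬝ᵥ Err.mulVec v| ≤ η * (v ⬝ᵥ A.mulVec v))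
    (hpinch : ∀ v : Fin m → ℝ, v ⬝ᵥ v = 1 → ε * R ≤ v ⬝ᵥ Abar.mulVec v) :
    ∀ v : Fin m → ℝ, v ⬝ᵥ v = 1 →
      (1 / 3) * (v ⬝ᵥ Abar.mulVec v) ≤ v ⬝ᵥ A.mulVec v ∧
      (ε / 3) * R ≤ (1 / 3) * (v ⬝ᵥ Abar.mulVec v) := by
  intro v hv
  have hAv : 0 ≤ v ⬝ᵥ A.mulVec v := by simpa using hA.dotProduct_mulVec_nonneg v
  have hkey : v ⬝ᵥ Abar.mulVec v = v ⬝ᵥ A.mulVec v + v ⬝ᵥ Err.mulVec v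
      - (1 / nf2) * ∑ i, ∑ j, v i * v j * ∑ k, (A i j * A k k - A i k * A k j) := by
    simp only [dotProduct, mulVec, hGauss]
    rw [Finset.mul_sum, ← Finset.sum_add_distrib, ← Finset.sum_sub_distrib]
    refine Finset.sum_congr rfl fun i _ => ?_
    have h1 : ∑ j, (A i j + Err i j
          - 1 / nf2 * ∑ k, (A i j * A k k - A i k * A k j)) * v j
        = (∑ j, A i j * v j) + (∑ j, Err i j * v j)
          - (1 / nf2) * ∑ j, v j * ∑ k, (A i j * A k k - A i k * A k j) := by
      rw [Finset.mul_sum, ← Finset.sum_add_distrib, ← Finset.sum_sub_distrib]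
      exact Finset.sum_congr rfl fun j _ => by ring
    have h2 : ∑ j, v i * v j * ∑ k, (A i j * A k k - A i k * A k j)
        = v i * ∑ j, v j * ∑ k, (A i j * A k k - A i k * A k j) := by
      rw [Finset.mul_sum]
      exact Finset.sum_congr rfl fun j _ => by ring
    rw [h1, h2]
    ring
  have hE := hErr v
  have hc := hcorr v
  have hEl : -(η * (v ⬝ᵥ A.mulVec v)) ≤ v ⬝ᵥ Err.mulVec v := (abs_le.mp hE).1
  have hEr : v ⬝ᵥ Err.mulVec v ≤ η * (v ⬝ᵥ A.mulVec v) := (abs_le.mp hE).2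
  have hupper : v ⬝ᵥ Abar.mulVec v ≤ 3 * (v ⬝ᵥ A.mulVec v) := by
    rw [hkey]
    have h1 : 0 ≤ (1 / nf2) * ∑ i, ∑ j, v i * v j * ∑ k, (A i j * A k k - A i k * A k j) :=
      mul_nonneg (by positivity) hc.1
    nlinarith
  constructor
  · linarith
  · have := hpinch v hv
    linarith
end
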